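/- arXiv:1403.7420 — 2 statements merged into one kernel-verified Lean document; each statement's English description precedes it below -/
import Mathlib

section
/- Suppose α ≤ 0 ≤ γ with α ≠ γ (interpreting r^0/0 as log r). Then for every n ≥ 2, the infimum of E_n over configurations (x_1,…,x_n) ∈ (ℝ^d)^n with pairwise distinct points is attained. -/
/-! The interaction `w = pw γ - pw α` is continuous and nonnegative on `(0, ∞)`, because
`pw α r ≤ log r ≤ pw γ r`, and it tends to `∞` both as `r → ∞` and as `r → 0⁺`; the
substitution `r ↦ r⁻¹`, which turns `(α, γ)` into `(-γ, -α)`, reduces the second limit to the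
first. Hence the configurations whose energy is at most that of a fixed injective one have all
pairwise distances in a compact interval `[ε, D] ⊂ (0, ∞)`. Translated so that one point sits at
the origin, they lie in a compact set of injective configurations on which the energy is
continuous, and its minimizer there is a global minimizer. -/

open Finset

/-- `r^η/η` with the convention `r^0/0 = log r`. -/
noncomputable def pw (η r : ℝ) : ℝ := if η = 0 then Real.log r else r ^ η / η

noncomputable def En (d n : ℕ) (α γ : ℝ) (x : Fin n → EuclideanSpace ℝ (Fin d)) : ℝ :=
  ∑ i, ∑ j, if i = j then 0 else pw γ ‖x i - x j‖ - pw α ‖x i - x j‖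

open Filter Topology Set Function

lemma pw_zero : pw 0 = Real.log := funext fun _ => if_pos rfl

lemma pw_neg_inv (η : ℝ) {r : ℝ} (hr : 0 ≤ r) : pw (-η) r⁻¹ = -pw η r := by
  unfold pw
  split_ifs with h h' h'
  · exact Real.log_inv r
  · exact absurd (neg_eq_zero.mp h) h'
  · exact absurd (neg_eq_zero.mpr h') h
  · rw [Real.inv_rpow hr, ← Real.rpow_neg hr, neg_neg, div_neg]

lemma log_le_pw {η r : ℝ} (hη : 0 ≤ η) (hr : 0 ≤ r) : Real.log r ≤ pw η r := by
  rcases hη.eq_or_lt with rfl | hη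
  · rw [pw_zero]
  · rw [pw, if_neg hη.ne']
    exact Real.log_le_rpow_div hr hη

lemma pw_le_log {η r : ℝ} (hη : η ≤ 0) (hr : 0 ≤ r) : pw η r ≤ Real.log r := by
  have h := log_le_pw (neg_nonneg.mpr hη) (inv_nonneg.mpr hr)
  rw [Real.log_inv, pw_neg_inv η hr] at h
  linarith

lemma pw_continuousAt (η : ℝ) {r : ℝ} (hr : r ≠ 0) : ContinuousAt (pw η) r := by
  unfold pw
  split_ifs with hη
  · exact Real.continuousAt_log hr
  · exact (Real.continuousAt_rpow_const r η (Or.inl hr)).div_const η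

lemma tendsto_pw_sub_log_atTop {η : ℝ} (hη : 0 < η) :
    Tendsto (fun r => pw η r - Real.log r) atTop atTop := by
  have hlog := (isLittleO_log_rpow_atTop hη).bound (c := 1 / (2 * η)) (by positivity)
  have hpow := (tendsto_rpow_atTop hη).atTop_div_const (show 0 < 2 * η by positivity)
  refine tendsto_atTop_mono' atTop ?_ hpow
  filter_upwards [hlog, eventually_gt_atTop 0] with r hr hr0
  rw [Real.norm_eq_abs, Real.norm_of_nonneg (Real.rpow_nonneg hr0.le η)] at hr
  rw [pw, if_neg hη.ne']
  have := le_abs_self (Real.log r)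
  have e : r ^ η / η = r ^ η / (2 * η) + 1 / (2 * η) * r ^ η := by field_simp; ring
  linarith

noncomputable def interaction (α γ r : ℝ) : ℝ := pw γ r - pw α r

section Interaction

variable {α γ : ℝ}

lemma interaction_nonneg (hα : α ≤ 0) (hγ : 0 ≤ γ) {r : ℝ} (hr : 0 ≤ r) :
    0 ≤ interaction α γ r :=
  sub_nonneg.mpr ((pw_le_log hα hr).trans (log_le_pw hγ hr))

lemma interaction_neg_inv (α γ : ℝ) {r : ℝ} (hr : 0 ≤ r) :
    interaction (-γ) (-α) r⁻¹ = interaction α γ r := by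
  rw [interaction, interaction, pw_neg_inv α hr, pw_neg_inv γ hr, neg_sub_neg]

lemma continuousOn_interaction (α γ : ℝ) : ContinuousOn (interaction α γ) (Ioi 0) :=
  fun _ hr => ((pw_continuousAt γ (ne_of_gt hr)).sub
    (pw_continuousAt α (ne_of_gt hr))).continuousWithinAt

lemma tendsto_interaction_atTop (hα : α ≤ 0) (hγ : 0 ≤ γ) (hne : α ≠ γ) :
    Tendsto (interaction α γ) atTop atTop := by
  rcases hγ.eq_or_lt with rfl | hγ
  · have hα : α < 0 := lt_of_le_of_ne hα hne
    refine tendsto_atTop_mono' atTop ?_ Real.tendsto_log_atTop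
    filter_upwards [eventually_ge_atTop 0] with r hr
    have : r ^ α / α ≤ 0 := div_nonpos_of_nonneg_of_nonpos (Real.rpow_nonneg hr α) hα.le
    rw [interaction, pw_zero, pw, if_neg hα.ne]
    linarith
  · refine tendsto_atTop_mono' atTop ?_ (tendsto_pw_sub_log_atTop hγ)
    filter_upwards [eventually_ge_atTop 0] with r hr
    exact sub_le_sub_left (pw_le_log hα hr) _

lemma tendsto_interaction_nhdsGT_zero (hα : α ≤ 0) (hγ : 0 ≤ γ) (hne : α ≠ γ) :
    Tendsto (interaction α γ) (𝓝[>] 0) atTop := by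
  have h := (tendsto_interaction_atTop (neg_nonpos.mpr hγ) (neg_nonneg.mpr hα)
    (neg_injective.ne hne.symm)).comp tendsto_inv_nhdsGT_zero
  refine h.congr' ?_
  filter_upwards [self_mem_nhdsWithin] with r hr
  exact interaction_neg_inv α γ (le_of_lt hr)

end Interaction

section Configurations

variable {ι E : Type*} [NormedAddCommGroup E]

def pinnedConfigs (i₀ : ι) (ε D : ℝ) : Set (ι → E) :=
  {x | x i₀ = 0 ∧ ∀ i j, i ≠ j → ‖x i - x j‖ ∈ Set.Icc ε D}

lemma injective_of_mem_pinnedConfigs {i₀ : ι} {ε D : ℝ} (hε : 0 < ε) {x : ι → E}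
    (hx : x ∈ pinnedConfigs i₀ ε D) : Injective x := by
  intro i j hij
  by_contra hne
  have := (hx.2 i j hne).1
  rw [hij, sub_self, norm_zero] at this
  exact this.not_gt hε

variable [Fintype ι]

lemma isCompact_pinnedConfigs [ProperSpace E] (i₀ : ι) (ε D : ℝ) :
    IsCompact (pinnedConfigs i₀ ε D : Set (ι → E)) := by
  refine Metric.isCompact_of_isClosed_isBounded ?_ ?_
  · simp only [pinnedConfigs, Set.ofPred_and, Set.ofPred_forall]
    exact (isClosed_eq (continuous_apply i₀) continuous_const).inter
      (isClosed_iInter fun i => isClosed_iInter fun j => isClosed_iInter fun _ =>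
        isClosed_Icc.preimage (by fun_prop))
  · refine (Metric.isBounded_closedBall (x := 0) (r := max D 0)).subset fun x hx => ?_
    rw [mem_closedBall_zero_iff, pi_norm_le_iff_of_nonneg (le_max_right _ _)]
    intro i
    rcases eq_or_ne i i₀ with rfl | hi
    · simp [hx.1]
    · calc ‖x i‖ = ‖x i - x i₀‖ := by rw [hx.1, sub_zero]
        _ ≤ D := (hx.2 i i₀ hi).2
        _ ≤ max D 0 := le_max_left _ _

variable [DecidableEq ι]

noncomputable def pairEnergy (w : ℝ → ℝ) (x : ι → E) : ℝ :=
  ∑ i, ∑ j, if i = j then 0 else w ‖x i - x j‖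

variable {w : ℝ → ℝ}

lemma pairEnergy_sub_const (x : ι → E) (c : E) :
    pairEnergy w (fun i => x i - c) = pairEnergy w x := by
  simp only [pairEnergy, sub_sub_sub_cancel_right]

lemma le_pairEnergy (hw : ∀ r, 0 < r → 0 ≤ w r) {x : ι → E} (hx : Injective x) {i j : ι}
    (hij : i ≠ j) : w ‖x i - x j‖ ≤ pairEnergy w x := by
  have hterm : ∀ k l, 0 ≤ if k = l then 0 else w ‖x k - x l‖ := fun k l => by
    split_ifs with hkl
    · exact le_rfl
    · exact hw _ (norm_pos_iff.mpr (sub_ne_zero.mpr (hx.ne hkl)))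
  calc w ‖x i - x j‖ = if i = j then 0 else w ‖x i - x j‖ := (if_neg hij).symm
    _ ≤ ∑ l, if i = l then 0 else w ‖x i - x l‖ :=
      single_le_sum (fun l _ => hterm i l) (mem_univ j)
    _ ≤ pairEnergy w x :=
      single_le_sum (f := fun k => ∑ l, if k = l then 0 else w ‖x k - x l‖)
        (fun k _ => sum_nonneg fun l _ => hterm k l) (mem_univ i)

lemma continuousOn_pairEnergy (hw : ContinuousOn w (Ioi 0)) :
    ContinuousOn (pairEnergy w) {x : ι → E | Injective x} := by
  refine continuousOn_finsetSum _ fun i _ => continuousOn_finsetSum _ fun j _ => ?_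
  split_ifs with hij
  · exact continuousOn_const
  · refine hw.comp (by fun_prop) fun x hx => ?_
    exact norm_pos_iff.mpr (sub_ne_zero.mpr (hx.ne hij))

lemma exists_pairEnergy_le_confined (hw : ∀ r, 0 < r → 0 ≤ w r)
    (hw_zero : Tendsto w (𝓝[>] 0) atTop) (hw_top : Tendsto w atTop atTop) (M : ℝ) :
    ∃ ε > 0, ∃ D, ∀ x : ι → E, Injective x → pairEnergy w x ≤ M →
      ∀ i j, i ≠ j → ‖x i - x j‖ ∈ Set.Icc ε D := by
  obtain ⟨ε, hε, hε_large⟩ := mem_nhdsGT_iff_exists_Ioo_subset.mp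
    (hw_zero.eventually (eventually_gt_atTop M))
  obtain ⟨D, hD_large⟩ := eventually_atTop.mp (hw_top.eventually (eventually_gt_atTop M))
  refine ⟨ε, hε, D, fun x hx hM i j hij => ?_⟩
  have hpos : 0 < ‖x i - x j‖ := norm_pos_iff.mpr (sub_ne_zero.mpr (hx.ne hij))
  have hle : w ‖x i - x j‖ ≤ M := (le_pairEnergy hw hx hij).trans hM
  constructor
  · by_contra! h
    exact hle.not_gt (hε_large ⟨hpos, h⟩)
  · by_contra! h
    exact hle.not_gt (hD_large _ h.le)

theorem exists_injective_isMinOn_pairEnergy [ProperSpace E] (hw_cont : ContinuousOn w (Ioi 0))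
    (hw : ∀ r, 0 < r → 0 ≤ w r) (hw_zero : Tendsto w (𝓝[>] 0) atTop)
    (hw_top : Tendsto w atTop atTop) (hinj : ∃ x : ι → E, Injective x) :
    ∃ x : ι → E, Injective x ∧ IsMinOn (pairEnergy w) {y | Injective y} x := by
  obtain ⟨x₀, hx₀⟩ := hinj
  rcases isEmpty_or_nonempty ι with hι | ⟨⟨i₀⟩⟩
  · exact ⟨x₀, hx₀, fun y _ => (congrArg (pairEnergy w) (Subsingleton.elim x₀ y)).le⟩
  obtain ⟨ε, hε, D, hconf⟩ :=
    exists_pairEnergy_le_confined (ι := ι) (E := E) hw hw_zero hw_top (pairEnergy w x₀)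
  have hpin : ∀ y : ι → E, Injective y → pairEnergy w y ≤ pairEnergy w x₀ →
      (fun i => y i - y i₀) ∈ pinnedConfigs i₀ ε D := fun y hy hle =>
    ⟨sub_self _, fun i j hij => by
      simpa only [sub_sub_sub_cancel_right] using hconf y hy hle i j hij⟩
  obtain ⟨z, hz, hz_min⟩ := (isCompact_pinnedConfigs i₀ ε D).exists_isMinOn
    ⟨_, hpin x₀ hx₀ le_rfl⟩
    ((continuousOn_pairEnergy hw_cont).mono fun _ hx => injective_of_mem_pinnedConfigs hε hx)
  refine ⟨z, injective_of_mem_pinnedConfigs hε hz, fun y hy => ?_⟩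
  rcases le_or_gt (pairEnergy w y) (pairEnergy w x₀) with hle | hgt
  · calc pairEnergy w z ≤ pairEnergy w (fun i => y i - y i₀) := hz_min (hpin y hy hle)
      _ = pairEnergy w y := pairEnergy_sub_const y (y i₀)
  · calc pairEnergy w z ≤ pairEnergy w (fun i => x₀ i - x₀ i₀) := hz_min (hpin x₀ hx₀ le_rfl)
      _ = pairEnergy w x₀ := pairEnergy_sub_const x₀ (x₀ i₀)
      _ ≤ pairEnergy w y := hgt.le

end Configurations

lemma En_eq_pairEnergy (d n : ℕ) (α γ : ℝ) :
    En d n α γ = pairEnergy (interaction α γ) := rfl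

theorem stmt_5_general (d n : ℕ) (hd : 1 ≤ d) (α γ : ℝ)
    (hα : α ≤ 0) (hγ : 0 ≤ γ) (hne : α ≠ γ) :
    ∃ x : Fin n → EuclideanSpace ℝ (Fin d), Function.Injective x ∧
      ∀ y : Fin n → EuclideanSpace ℝ (Fin d), Function.Injective y →
        En d n α γ x ≤ En d n α γ y := by
  have : NeZero d := ⟨Nat.one_le_iff_ne_zero.mp hd⟩
  obtain ⟨x, hx, hmin⟩ := exists_injective_isMinOn_pairEnergy (continuousOn_interaction α γ)
    (fun _ hr => interaction_nonneg hα hγ hr.le) (tendsto_interaction_nhdsGT_zero hα hγ hne)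
    (tendsto_interaction_atTop hα hγ hne)
    ⟨_, (Fin.valEmbedding.trans (Infinite.natEmbedding (EuclideanSpace ℝ (Fin d)))).injective⟩
  rw [En_eq_pairEnergy]
  exact ⟨x, hx, fun y hy => hmin hy⟩

theorem stmt_5 (d n : ℕ) (hd : 1 ≤ d) (hn : 2 ≤ n) (α γ : ℝ)
    (hα : α ≤ 0) (hγ : 0 ≤ γ) (hne : α ≠ γ) :
    ∃ x : Fin n → EuclideanSpace ℝ (Fin d), Function.Injective x ∧
      ∀ y : Fin n → EuclideanSpace ℝ (Fin d), Function.Injective y →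
        En d n α γ x ≤ En d n α γ y :=
  stmt_5_general d n hd α γ hα hγ hne
end

section
/- Suppose α ≤ 1 ≤ γ with α < γ (d = 1). The global minimizer of E_n among ordered configurations x_1 ≤ … ≤ x_n in ℝ with zero center of mass is unique, and it is symmetric: x_i = −x_{n+1−i} for all i. -/
/-!
The kernel `w(r) = r^γ/γ - r^α/α` has strictly increasing derivative `r^(γ-1) - r^(α-1)`,
so it is strictly convex on `(0, ∞)`, and on `[0, ∞)` when `α > 0`. On ordered configurations
every distance `|x i - x j|` is linear in `x`, so `E_n` is strictly convex on the convex set of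
admissible configurations: two of them with equal pairwise distances differ by a constant,
which the zero center of mass forces to vanish. Hence the minimizer is unique, and since
`x ↦ (-x_{n+1-i})_i` preserves admissibility and energy, the minimizer is symmetric.
-/
open Finset

noncomputable def En1 (n : ℕ) (α γ : ℝ) (x : Fin n → ℝ) : ℝ :=
  ∑ i, ∑ j, if i = j then 0 else pw γ |x i - x j| - pw α |x i - x j|

/-- Admissible configuration: ordered, zero center of mass, distinct if `α ≤ 0`. -/
def Adm (n : ℕ) (α : ℝ) (x : Fin n → ℝ) : Prop :=
  Monotone x ∧ (∑ i, x i) = 0 ∧ (α ≤ 0 → Function.Injective x)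

noncomputable def wf (α γ r : ℝ) : ℝ := pw γ r - pw α r

lemma hasDerivAt_pw (η : ℝ) {r : ℝ} (hr : 0 < r) :
    HasDerivAt (pw η) (r ^ (η - 1)) r := by
  rcases eq_or_ne η 0 with rfl | hη
  · have hlog : pw 0 = Real.log := funext fun s => by simp [pw]
    rw [hlog, zero_sub, Real.rpow_neg_one]
    exact Real.hasDerivAt_log hr.ne'
  · have hpow : pw η = fun s => s ^ η / η := funext fun s => by simp [pw, hη]
    rw [hpow]
    have hderiv := (Real.hasDerivAt_rpow_const (p := η) (Or.inl hr.ne')).div_const η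
    rwa [mul_div_cancel_left₀ _ hη] at hderiv

lemma hasDerivAt_wf (α γ : ℝ) {r : ℝ} (hr : 0 < r) :
    HasDerivAt (wf α γ) (r ^ (γ - 1) - r ^ (α - 1)) r :=
  (hasDerivAt_pw γ hr).sub (hasDerivAt_pw α hr)

lemma continuousOn_pw_Ici {η : ℝ} (hη : 0 < η) : ContinuousOn (pw η) (Set.Ici 0) := by
  have hpow : pw η = fun s => s ^ η / η := funext fun s => by simp [pw, hη.ne']
  rw [hpow]
  exact ((Real.continuous_rpow_const hη.le).div_const η).continuousOn

section Convexity

variable {α γ : ℝ}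

/-- `r ↦ r^(γ-1)` is increasing and `r ↦ r^(α-1)` decreasing, one of them strictly. -/
lemma strictMonoOn_deriv_wf (hα : α ≤ 1) (hγ : 1 ≤ γ) (h : α < γ) :
    StrictMonoOn (deriv (wf α γ)) (Set.Ioi 0) := by
  intro r (hr : 0 < r) s (hs : 0 < s) hrs
  rw [(hasDerivAt_wf α γ hr).deriv, (hasDerivAt_wf α γ hs).deriv]
  rcases lt_or_eq_of_le hγ with hγ1 | rfl
  · have hup : r ^ (γ - 1) < s ^ (γ - 1) := Real.rpow_lt_rpow hr.le hrs (by linarith)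
    have hdown : s ^ (α - 1) ≤ r ^ (α - 1) :=
      Real.rpow_le_rpow_of_nonpos hr hrs.le (by linarith)
    linarith
  · have hdown : s ^ (α - 1) < r ^ (α - 1) := Real.rpow_lt_rpow_of_neg hr hrs (by linarith)
    simp only [sub_self, Real.rpow_zero]
    linarith

lemma strictConvexOn_wf_Ioi (hα : α ≤ 1) (hγ : 1 ≤ γ) (h : α < γ) :
    StrictConvexOn ℝ (Set.Ioi 0) (wf α γ) :=
  StrictMonoOn.strictConvexOn_of_deriv (convex_Ioi 0)
    (fun _ hr => (hasDerivAt_wf α γ hr).continuousAt.continuousWithinAt)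
    (by rw [interior_Ioi]; exact strictMonoOn_deriv_wf hα hγ h)

lemma strictConvexOn_wf_Ici (hα : α ≤ 1) (hγ : 1 ≤ γ) (h : α < γ) (hα0 : 0 < α) :
    StrictConvexOn ℝ (Set.Ici 0) (wf α γ) :=
  StrictMonoOn.strictConvexOn_of_deriv (f := wf α γ) (convex_Ici 0)
    ((continuousOn_pw_Ici (hα0.trans h)).sub (continuousOn_pw_Ici hα0))
    (by rw [interior_Ici]; exact strictMonoOn_deriv_wf hα hγ h)

end Convexity

/-- Distance `0` is admissible only when `α > 0`; for `α ≤ 0`, `wf α γ 0` is a junk value. -/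
def gapSet (α : ℝ) : Set ℝ := if 0 < α then Set.Ici 0 else Set.Ioi 0

lemma strictConvexOn_wf {α γ : ℝ} (hα : α ≤ 1) (hγ : 1 ≤ γ) (h : α < γ) :
    StrictConvexOn ℝ (gapSet α) (wf α γ) := by
  unfold gapSet
  split_ifs with hα0
  · exact strictConvexOn_wf_Ici hα hγ h hα0
  · exact strictConvexOn_wf_Ioi hα hγ h

lemma En1_eq_sum_wf (n : ℕ) (α γ : ℝ) (x : Fin n → ℝ) :
    En1 n α γ x = ∑ i, ∑ j, if i = j then 0 else wf α γ |x i - x j| :=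
  rfl

lemma En1_comp_perm {n : ℕ} (α γ : ℝ) (x : Fin n → ℝ) (σ : Equiv.Perm (Fin n)) :
    En1 n α γ (x ∘ σ) = En1 n α γ x :=
  Fintype.sum_equiv σ _ _ fun i => Fintype.sum_equiv σ _ _ fun j => by
    simp only [Function.comp_apply, σ.injective.eq_iff]

lemma En1_neg {n : ℕ} (α γ : ℝ) (x : Fin n → ℝ) : En1 n α γ (-x) = En1 n α γ x := by
  simp only [En1, Pi.neg_apply, neg_sub_neg, abs_sub_comm]

namespace Adm

variable {n : ℕ} {α : ℝ} {x y : Fin n → ℝ}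

lemma neg_comp_rev (hx : Adm n α x) : Adm n α (-(x ∘ Fin.revPerm)) := by
  obtain ⟨hmono, hsum, hinj⟩ := hx
  refine ⟨fun i j hij => neg_le_neg (hmono (Fin.rev_le_rev.mpr hij)), ?_,
    fun hα => neg_injective.comp ((hinj hα).comp Fin.revPerm.injective)⟩
  simp only [Pi.neg_apply, Function.comp_apply, sum_neg_distrib,
    Equiv.sum_comp Fin.revPerm x, hsum, neg_zero]

lemma abs_sub_mem_gapSet (hx : Adm n α x) {i j : Fin n} (hij : i ≠ j) :
    |x i - x j| ∈ gapSet α := by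
  unfold gapSet
  split_ifs with hα0
  · exact Set.mem_Ici.mpr (abs_nonneg _)
  · exact abs_pos.mpr (sub_ne_zero.mpr fun e => hij (hx.2.2 (not_lt.mp hα0) e))

end Adm

lemma convex_setOf_adm (n : ℕ) (α : ℝ) : Convex ℝ {x : Fin n → ℝ | Adm n α x} := by
  intro x ⟨hxm, hxs, hxi⟩ y ⟨hym, hys, hyi⟩ a b ha hb hab
  show Adm n α (a • x + b • y)
  refine ⟨(hxm.const_smul ha).add (hym.const_smul hb), ?_, fun hα => ?_⟩
  · simp only [Pi.add_apply, Pi.smul_apply, smul_eq_mul, sum_add_distrib, ← mul_sum, hxs, hys,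
      mul_zero, add_zero]
  · have hxs := hxm.strictMono_of_injective (hxi hα)
    have hys := hym.strictMono_of_injective (hyi hα)
    rcases ha.eq_or_lt with rfl | ha
    · rw [zero_add] at hab
      simpa [hab] using hys.injective
    · exact ((hxs.const_smul ha).add_monotone (hys.monotone.const_smul hb)).injective

lemma abs_sub_smul_add_smul_of_monotone {n : ℕ} {x y : Fin n → ℝ} (hx : Monotone x)
    (hy : Monotone y) {a b : ℝ} (ha : 0 ≤ a) (hb : 0 ≤ b) (i j : Fin n) :
    |(a • x + b • y) i - (a • x + b • y) j| = a * |x i - x j| + b * |y i - y j| := by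
  simp only [Pi.add_apply, Pi.smul_apply, smul_eq_mul]
  rcases le_total i j with hij | hij
  · have hxij := hx hij
    have hyij := hy hij
    rw [abs_of_nonpos (by nlinarith), abs_of_nonpos (by linarith), abs_of_nonpos (by linarith)]
    ring
  · have hxij := hx hij
    have hyij := hy hij
    rw [abs_of_nonneg (by nlinarith), abs_of_nonneg (by linarith), abs_of_nonneg (by linarith)]
    ring

lemma sub_eq_sub_of_abs_eq_of_monotone {n : ℕ} {x y : Fin n → ℝ} (hx : Monotone x)
    (hy : Monotone y) {i j : Fin n} (h : |x i - x j| = |y i - y j|) : x i - x j = y i - y j := by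
  rcases le_total i j with hij | hij
  · rwa [abs_of_nonpos (sub_nonpos.mpr (hx hij)), abs_of_nonpos (sub_nonpos.mpr (hy hij)),
      neg_inj] at h
  · rwa [abs_of_nonneg (sub_nonneg.mpr (hx hij)), abs_of_nonneg (sub_nonneg.mpr (hy hij))] at h

lemma eq_of_sub_eq_sub_of_sum_eq {ι : Type*} [Fintype ι] {x y : ι → ℝ}
    (hsub : ∀ i j, x i - x j = y i - y j) (hsum : ∑ i, x i = ∑ i, y i) : x = y := by
  funext i
  have hcard : (Fintype.card ι : ℝ) ≠ 0 :=
    Nat.cast_ne_zero.mpr (Fintype.card_pos_iff.mpr ⟨i⟩).ne'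
  have hzero : (Fintype.card ι : ℝ) * (x i - y i) = 0 := by
    calc (Fintype.card ι : ℝ) * (x i - y i) = ∑ j, (x i - y i) := by
          rw [sum_const, card_univ, nsmul_eq_mul]
      _ = ∑ j, (x j - y j) := sum_congr rfl fun j _ => by linarith [hsub i j]
      _ = 0 := by rw [sum_sub_distrib, hsum, sub_self]
  linarith [(mul_eq_zero.mp hzero).resolve_left hcard]

lemma exists_abs_sub_ne {n : ℕ} {α : ℝ} {x y : Fin n → ℝ} (hx : Adm n α x)
    (hy : Adm n α y) (hxy : x ≠ y) : ∃ i j, |x i - x j| ≠ |y i - y j| := by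
  by_contra! hgaps
  exact hxy (eq_of_sub_eq_sub_of_sum_eq
    (fun i j => sub_eq_sub_of_abs_eq_of_monotone hx.1 hy.1 (hgaps i j))
    (hx.2.1.trans hy.2.1.symm))

theorem strictConvexOn_En1 (n : ℕ) {α γ : ℝ} (hα : α ≤ 1) (hγ : 1 ≤ γ) (h : α < γ) :
    StrictConvexOn ℝ {x : Fin n → ℝ | Adm n α x} (En1 n α γ) := by
  refine ⟨convex_setOf_adm n α, fun x hx y hy hxy a b ha hb hab => ?_⟩
  have hw := strictConvexOn_wf hα hγ h
  have hdist := abs_sub_smul_add_smul_of_monotone hx.1 hy.1 ha.le hb.le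
  have hterm : ∀ i j,
      (if i = j then 0 else wf α γ |(a • x + b • y) i - (a • x + b • y) j|) ≤
        a * (if i = j then 0 else wf α γ |x i - x j|) +
          b * (if i = j then 0 else wf α γ |y i - y j|) := by
    intro i j
    split_ifs with hij
    · simp
    · rw [hdist]
      exact hw.convexOn.2 (hx.abs_sub_mem_gapSet hij) (hy.abs_sub_mem_gapSet hij) ha.le hb.le hab
  obtain ⟨i₀, j₀, hne⟩ := exists_abs_sub_ne hx hy hxy
  have hij₀ : i₀ ≠ j₀ := by rintro rfl; simp at hne
  have hstrict : wf α γ |(a • x + b • y) i₀ - (a • x + b • y) j₀| <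
      a * wf α γ |x i₀ - x j₀| + b * wf α γ |y i₀ - y j₀| := by
    rw [hdist]
    exact hw.2 (hx.abs_sub_mem_gapSet hij₀) (hy.abs_sub_mem_gapSet hij₀) hne ha hb hab
  simp only [En1_eq_sum_wf, smul_eq_mul, mul_sum, ← sum_add_distrib]
  refine sum_lt_sum (fun i _ => sum_le_sum fun j _ => hterm i j) ⟨i₀, mem_univ _, ?_⟩
  refine sum_lt_sum (fun j _ => hterm i₀ j) ⟨j₀, mem_univ _, ?_⟩
  simpa only [if_neg hij₀] using hstrict

theorem stmt_17_general (n : ℕ) (α γ : ℝ) (hα : α ≤ 1) (hγ : 1 ≤ γ) (h : α < γ)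
    (x : Fin n → ℝ) (hx : Adm n α x)
    (hxmin : ∀ z : Fin n → ℝ, Adm n α z → En1 n α γ x ≤ En1 n α γ z) :
    (∀ y : Fin n → ℝ, Adm n α y →
      (∀ z : Fin n → ℝ, Adm n α z → En1 n α γ y ≤ En1 n α γ z) → x = y) ∧
    (∀ i : Fin n, x i = -x i.rev) := by
  have huniq : ∀ y : Fin n → ℝ, Adm n α y →
      (∀ z : Fin n → ℝ, Adm n α z → En1 n α γ y ≤ En1 n α γ z) → x = y :=
    fun y hy hymin => (strictConvexOn_En1 n hα hγ h).eq_of_isMinOn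
      (isMinOn_iff.mpr hxmin) (isMinOn_iff.mpr hymin) hx hy
  refine ⟨huniq, fun i => ?_⟩
  have hreflect : x = -(x ∘ Fin.revPerm) :=
    huniq _ hx.neg_comp_rev fun z hz => by rw [En1_neg, En1_comp_perm]; exact hxmin z hz
  exact congrFun hreflect i

theorem stmt_17 (n : ℕ) (hn : 2 ≤ n) (α γ : ℝ) (hα : α ≤ 1) (hγ : 1 ≤ γ) (h : α < γ)
    (x : Fin n → ℝ) (hx : Adm n α x)
    (hxmin : ∀ z : Fin n → ℝ, Adm n α z → En1 n α γ x ≤ En1 n α γ z) :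
    (∀ y : Fin n → ℝ, Adm n α y →
      (∀ z : Fin n → ℝ, Adm n α z → En1 n α γ y ≤ En1 n α γ z) → x = y) ∧
    (∀ i : Fin n, x i = -x i.rev) :=
  stmt_17_general n α γ hα hγ h x hx hxmin
end
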